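/- arXiv:2508.11306 — 6 statements merged into one kernel-verified Lean document; each statement's English description precedes it below -/
import Mathlib

section
/- Let R be a commutative ring and P an ideal of R. Let m₀, m₁, m₂, m₃ be finite index types with order functions a⁰ : m₀ → ℤ, a¹ : m₁ → ℤ, a² : m₂ → ℤ, a³ : m₃ → ℤ, and let F₁ : R^{m₁} → R^{m₀}, F₂ : R^{m₂} → R^{m₁}, F₃ : R^{m₃} → R^{m₂} be R-linear maps given by matrices whose entries satisfy (F₂)_{p,q} ∈ P^⟨a²_q − a¹_p⟩ for all p ∈ m₁, q ∈ m₂, and (F₃)_{q,l} ∈ P^⟨a³_l − a²_q⟩ for all q ∈ m₂, l ∈ m₃. Assume (i) F₂ ∘ F₃ = 0 and ker F₁ = range F₂, and (ii) (graded lifting property) for every r ∈ ℤ and every t : m₂ → R such that t_q ∈ P^⟨r − a²_q⟩ for all q and (F₂ t)_p ∈ P^⟨r − a¹_p + 1⟩ for all p, there exists s : m₃ → R with s_l ∈ P^⟨r − a³_l⟩ for all l and (t − F₃ s)_q ∈ P^⟨r − a²_q + 1⟩ for all q. Then for every r ∈ ℤ the restriction of the complex to the level-r submodules remains exact in the middle: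 every v : m₁ → R with F₁ v = 0 and v_p ∈ P^⟨r − a¹_p⟩ for all p equals F₂ t for some t : m₂ → R with t_q ∈ P^⟨r − a²_q⟩ for all q; conversely F₂ maps the level-r submodule of R^{m₂} into the level-r submodule of R^{m₁} intersected with ker F₁. -/
/-!
Exactness at level `r` is proved by induction on `r`. For `r` below every `a₂ q` the level-`r`
submodule of `R^{m₂}` is everything, so plain exactness suffices. Going from level `r` to `r + 1`:
if `v = F₂ t` with `t` of level `r` and `v` of level `r + 1`, the lifting property gives `s`
with `t - F₃ s` of level `r + 1`, and `F₂ (t - F₃ s) = v` because `F₂ F₃ = 0`.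
-/

/-- `P^⟨n⟩ = P^{max(n,0)}` for an integer `n` (so `P^⟨n⟩ = R` when `n ≤ 0`). -/
def Ideal.zpowNat {R : Type*} [CommRing R] (P : Ideal R) (n : ℤ) : Ideal R :=
  P ^ n.toNat

open Matrix

namespace Ideal

variable {R : Type*} [CommRing R] (P : Ideal R)

theorem zpowNat_antitone : Antitone P.zpowNat :=
  fun _ _ h => Ideal.pow_le_pow_right (Int.toNat_le_toNat h)

theorem zpowNat_of_nonpos {n : ℤ} (hn : n ≤ 0) : P.zpowNat n = ⊤ := by
  rw [zpowNat, Int.toNat_of_nonpos hn, pow_zero, one_eq_top]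

variable {P}

theorem mul_mem_zpowNat_add {a b : ℤ} {x y : R} (hx : x ∈ P.zpowNat a) (hy : y ∈ P.zpowNat b) :
    x * y ∈ P.zpowNat (a + b) :=
  Ideal.pow_le_pow_right (by omega) (pow_add P _ _ ▸ Ideal.mul_mem_mul hx hy)

variable (P) {m : Type*}

def levelSubmodule (a : m → ℤ) (r : ℤ) : Submodule R (m → R) where
  carrier := {v | ∀ p, v p ∈ P.zpowNat (r - a p)}
  add_mem' hv hw p := add_mem (hv p) (hw p)
  zero_mem' _ := zero_mem _
  smul_mem' c _ hv p := mul_mem_left _ c (hv p)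

variable {P} {a : m → ℤ} {r : ℤ} {v : m → R}

theorem mem_levelSubmodule : v ∈ P.levelSubmodule a r ↔ ∀ p, v p ∈ P.zpowNat (r - a p) :=
  Iff.rfl

theorem mem_levelSubmodule_add_one :
    v ∈ P.levelSubmodule a (r + 1) ↔ ∀ p, v p ∈ P.zpowNat (r - a p + 1) := by
  simp only [mem_levelSubmodule, sub_add_eq_add_sub]

theorem levelSubmodule_antitone : Antitone (P.levelSubmodule a) :=
  fun _ _ h _ hv p => P.zpowNat_antitone (by omega) (hv p)

theorem mem_levelSubmodule_of_le (h : ∀ p, r ≤ a p) : v ∈ P.levelSubmodule a r :=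
  fun p => P.zpowNat_of_nonpos (n := r - a p) (by linarith [h p]) ▸ Submodule.mem_top

theorem mulVec_mem_levelSubmodule {n : Type*} [Fintype n] {b : n → ℤ} {F : Matrix m n R}
    (hF : ∀ p q, F p q ∈ P.zpowNat (b q - a p)) {t : n → R} (ht : t ∈ P.levelSubmodule b r) :
    F *ᵥ t ∈ P.levelSubmodule a r := fun p =>
  sum_mem _ fun q _ => by simpa using mul_mem_zpowNat_add (hF p q) (ht q)

end Ideal

open Ideal

section GradedLifting

variable {R : Type*} [CommRing R] {P : Ideal R} {m₁ m₂ m₃ : Type*} [Fintype m₂] [Fintype m₃]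
  {a₁ : m₁ → ℤ} {a₂ : m₂ → ℤ} {F₂ : Matrix m₁ m₂ R} {F₃ : Matrix m₂ m₃ R}

theorem exists_mem_levelSubmodule_succ_mulVec_eq {r : ℤ} (hcomp : F₂ * F₃ = 0)
    (hlift : ∀ t ∈ P.levelSubmodule a₂ r, F₂ *ᵥ t ∈ P.levelSubmodule a₁ (r + 1) →
      ∃ s, t - F₃ *ᵥ s ∈ P.levelSubmodule a₂ (r + 1))
    {t : m₂ → R} (ht : t ∈ P.levelSubmodule a₂ r) (hFt : F₂ *ᵥ t ∈ P.levelSubmodule a₁ (r + 1)) :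
    ∃ t' ∈ P.levelSubmodule a₂ (r + 1), F₂ *ᵥ t' = F₂ *ᵥ t := by
  obtain ⟨s, hts⟩ := hlift t ht hFt
  refine ⟨t - F₃ *ᵥ s, hts, ?_⟩
  rw [mulVec_sub, mulVec_mulVec, hcomp, zero_mulVec, sub_zero]

theorem exists_mem_levelSubmodule_mulVec_eq (hcomp : F₂ * F₃ = 0)
    (hlift : ∀ r, ∀ t ∈ P.levelSubmodule a₂ r, F₂ *ᵥ t ∈ P.levelSubmodule a₁ (r + 1) →
      ∃ s, t - F₃ *ᵥ s ∈ P.levelSubmodule a₂ (r + 1))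
    {r : ℤ} {t₀ : m₂ → R} (hFt₀ : F₂ *ᵥ t₀ ∈ P.levelSubmodule a₁ r) :
    ∃ t ∈ P.levelSubmodule a₂ r, F₂ *ᵥ t = F₂ *ᵥ t₀ := by
  obtain ⟨b, hb⟩ := Finite.exists_ge a₂
  suffices ∀ n, min r b ≤ n → F₂ *ᵥ t₀ ∈ P.levelSubmodule a₁ n →
      ∃ t ∈ P.levelSubmodule a₂ n, F₂ *ᵥ t = F₂ *ᵥ t₀ from
    this r (min_le_left r b) hFt₀
  intro n hn
  induction n, hn using Int.leInduction with
  | base =>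
    exact fun _ => ⟨t₀, mem_levelSubmodule_of_le fun q => (min_le_right r b).trans (hb q), rfl⟩
  | succ n _ ih =>
    intro hn
    obtain ⟨t, ht, hFt⟩ := ih (levelSubmodule_antitone (Int.le_add_one le_rfl) hn)
    obtain ⟨t', ht', hFt'⟩ := exists_mem_levelSubmodule_succ_mulVec_eq hcomp (hlift n) ht (hFt ▸ hn)
    exact ⟨t', ht', hFt'.trans hFt⟩

end GradedLifting

theorem statement0_general {R : Type*} [CommRing R] (P : Ideal R)
    {m₀ m₁ m₂ m₃ : Type*} [Fintype m₁] [Fintype m₂] [Fintype m₃]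
    (a₁ : m₁ → ℤ) (a₂ : m₂ → ℤ) (a₃ : m₃ → ℤ)
    (F₁ : Matrix m₀ m₁ R) (F₂ : Matrix m₁ m₂ R) (F₃ : Matrix m₂ m₃ R)
    (hF₂ : ∀ p q, F₂ p q ∈ P.zpowNat (a₂ q - a₁ p))
    (hcomp : F₂ * F₃ = 0)
    (hexact : ∀ v : m₁ → R, F₁.mulVec v = 0 ↔ ∃ t : m₂ → R, v = F₂.mulVec t)
    (hlift : ∀ (r : ℤ) (t : m₂ → R),
      (∀ q, t q ∈ P.zpowNat (r - a₂ q)) →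
      (∀ p, F₂.mulVec t p ∈ P.zpowNat (r - a₁ p + 1)) →
      ∃ s : m₃ → R, (∀ l, s l ∈ P.zpowNat (r - a₃ l)) ∧
        ∀ q, t q - F₃.mulVec s q ∈ P.zpowNat (r - a₂ q + 1)) :
    ∀ r : ℤ,
      (∀ v : m₁ → R, F₁.mulVec v = 0 → (∀ p, v p ∈ P.zpowNat (r - a₁ p)) →
        ∃ t : m₂ → R, (∀ q, t q ∈ P.zpowNat (r - a₂ q)) ∧ v = F₂.mulVec t) ∧
      (∀ t : m₂ → R, (∀ q, t q ∈ P.zpowNat (r - a₂ q)) →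
        F₁.mulVec (F₂.mulVec t) = 0 ∧ ∀ p, F₂.mulVec t p ∈ P.zpowNat (r - a₁ p)) := by
  have hlift' : ∀ r, ∀ t ∈ P.levelSubmodule a₂ r, F₂ *ᵥ t ∈ P.levelSubmodule a₁ (r + 1) →
      ∃ s, t - F₃ *ᵥ s ∈ P.levelSubmodule a₂ (r + 1) := fun r t ht hFt =>
    let ⟨s, _, hts⟩ := hlift r t ht (mem_levelSubmodule_add_one.1 hFt)
    ⟨s, mem_levelSubmodule_add_one.2 hts⟩
  intro r
  refine ⟨fun v hv hvr => ?_, fun t ht => ⟨(hexact _).2 ⟨t, rfl⟩, mulVec_mem_levelSubmodule hF₂ ht⟩⟩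
  obtain ⟨t₀, rfl⟩ := (hexact v).1 hv
  obtain ⟨t, ht, hFt⟩ := exists_mem_levelSubmodule_mulVec_eq hcomp hlift' hvr
  exact ⟨t, ht, hFt.symm⟩

/-- exactness of the level-`r` restriction of a standard resolution. -/
theorem statement0 {R : Type*} [CommRing R] (P : Ideal R)
    {m₀ m₁ m₂ m₃ : Type*} [Fintype m₀] [Fintype m₁] [Fintype m₂] [Fintype m₃]
    (a₀ : m₀ → ℤ) (a₁ : m₁ → ℤ) (a₂ : m₂ → ℤ) (a₃ : m₃ → ℤ)
    (F₁ : Matrix m₀ m₁ R) (F₂ : Matrix m₁ m₂ R) (F₃ : Matrix m₂ m₃ R)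
    (hF₂ : ∀ p q, F₂ p q ∈ P.zpowNat (a₂ q - a₁ p))
    (hF₃ : ∀ q l, F₃ q l ∈ P.zpowNat (a₃ l - a₂ q))
    (hcomp : F₂ * F₃ = 0)
    (hexact : ∀ v : m₁ → R, F₁.mulVec v = 0 ↔ ∃ t : m₂ → R, v = F₂.mulVec t)
    (hlift : ∀ (r : ℤ) (t : m₂ → R),
      (∀ q, t q ∈ P.zpowNat (r - a₂ q)) →
      (∀ p, F₂.mulVec t p ∈ P.zpowNat (r - a₁ p + 1)) →
      ∃ s : m₃ → R, (∀ l, s l ∈ P.zpowNat (r - a₃ l)) ∧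
        ∀ q, t q - F₃.mulVec s q ∈ P.zpowNat (r - a₂ q + 1)) :
    ∀ r : ℤ,
      (∀ v : m₁ → R, F₁.mulVec v = 0 → (∀ p, v p ∈ P.zpowNat (r - a₁ p)) →
        ∃ t : m₂ → R, (∀ q, t q ∈ P.zpowNat (r - a₂ q)) ∧ v = F₂.mulVec t) ∧
      (∀ t : m₂ → R, (∀ q, t q ∈ P.zpowNat (r - a₂ q)) →
        F₁.mulVec (F₂.mulVec t) = 0 ∧ ∀ p, F₂.mulVec t p ∈ P.zpowNat (r - a₁ p)) :=
  statement0_general P a₁ a₂ a₃ F₁ F₂ F₃ hF₂ hcomp hexact hlift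
end

section
/- Fix integers a ≥ 1 and i ∈ ℤ. Suppose the complex relations F_{j−1} ∘ F_j = 0 and the null-homotopy relations K_j ∘ F_j + F_{j+1} ∘ K_{j+1} = w·id_{M_j} hold for all j ∈ ℤ, that the higher-homotopy recursion Rec(a′, i′) holds for all 1 ≤ a′ ≤ a−1 and all i′ ∈ ℤ, and that Rec(a, i−1) holds. Then F_{i+2a−1} ∘ ( Σ_{a₁+a₂=a−1, a₁,a₂ ≥ 0} K^{(a₁)}_{i+2a₂+1} ∘ K^{(a₂)}_i + K^{(a)}_{i−1} ∘ F_{i−1} ) = 0 as a map M_{i−1} → M_{i+2a−2}. -/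
/-- Transport of a linear map along equalities of the indices of a `ℤ`-indexed
family of modules. -/
def lcast {R : Type*} [CommRing R] {M : ℤ → Type*}
    [∀ i, AddCommGroup (M i)] [∀ i, Module R (M i)]
    {i i' j j' : ℤ} (hi : i = i') (hj : j = j')
    (f : M i →ₗ[R] M j) : M i' →ₗ[R] M j' := by
  subst hi; subst hj; exact f

/-- The higher-homotopy recursion `Rec(a, i)` (for `a ≥ 1`):
`Σ_{a₁+a₂=a−1} K^{(a₁)}_{i+2a₂+1} ∘ K^{(a₂)}_i + F_{i+2a} ∘ K^{(a)}_i
  + K^{(a)}_{i−1} ∘ F_{i−1} = 0` as maps `M_{i−1} → M_{i+2a−1}`. -/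
def Rec {R : Type*} [CommRing R] {M : ℤ → Type*}
    [∀ i, AddCommGroup (M i)] [∀ i, Module R (M i)]
    (F : ∀ i : ℤ, M i →ₗ[R] M (i - 1))
    (Ka : ∀ (a : ℕ) (i : ℤ), M (i - 1) →ₗ[R] M (i + 2 * a))
    (a : ℕ) (ha : 1 ≤ a) (i : ℤ) : Prop :=
  (∑ p ∈ (Finset.HasAntidiagonal.antidiagonal (a - 1)).attach,
      lcast rfl
        (show i + 2 * (p.1.2 : ℤ) + 1 + 2 * (p.1.1 : ℤ) = i + 2 * (a : ℤ) - 1 by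
          have hp := Finset.HasAntidiagonal.mem_antidiagonal.mp p.2
          omega)
        ((Ka p.1.1 (i + 2 * (p.1.2 : ℤ) + 1)).comp
          (lcast rfl (show i + 2 * (p.1.2 : ℤ) = i + 2 * (p.1.2 : ℤ) + 1 - 1 by ring)
            (Ka p.1.2 i))))
    + (F (i + 2 * a)).comp (Ka a i)
    + lcast rfl (show i - 1 + 2 * (a : ℤ) = i + 2 * (a : ℤ) - 1 by ring)
        ((Ka a (i - 1)).comp (F (i - 1)))
  = 0

/-!
Collect all `M j` into the direct sum `⨁ j, M j`. There `F` and the `K^{(b)}` become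
endomorphisms `f` and `u_b`, and the hypotheses say `f² = 0`, `f u₀ + u₀ f = w` and
`S_b + f u_b + u_b f = 0` for `1 ≤ b < a`, where `S_b = Σ_{p+q=b-1} u_p u_q`. With
`U = Σ u_b tᵇ` the series `E = tU² + fU + Uf - w` therefore vanishes modulo `tᵃ`, and since `t`
and `w` are central, `fU² - U²f = EU - UE`; so `f` commutes with `S_a`. Consequently
`f (S_a + u_a f) = (S_a + f u_a + u_a f) f`, which vanishes on `M_{i-1}` by `Rec(a, i-1)`.
-/

section Algebra

open Finset PowerSeries

theorem commute_sum_antidiagonal_mul_of_anticomm {A : Type*} [Ring A] {c f : A}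
    (hc : ∀ x, Commute c x) (u : ℕ → A) (n : ℕ) (h₀ : f * u 0 + u 0 * f = c)
    (h : ∀ b, 1 ≤ b → b ≤ n →
      ∑ p ∈ antidiagonal (b - 1), u p.1 * u p.2 + f * u b + u b * f = 0) :
    Commute f (∑ p ∈ antidiagonal n, u p.1 * u p.2) := by
  set U := mk u
  set E := X * (U * U) + C f * U + U * C f - C c
  have hE : ∀ p ≤ n, coeff p E = 0 := by
    rintro (_ | b) hb
    · simp [E, U, h₀]
    · rw [map_sub, map_add, map_add, coeff_C_mul, coeff_mul_C, coeff_succ_X_mul, coeff_C,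
        coeff_mul, if_neg b.succ_ne_zero, sub_zero]
      simpa [U] using h (b + 1) (by omega) hb
  have hcU : C c * U = U * C c := by
    ext m; rw [coeff_C_mul, coeff_mul_C]; exact hc _
  have hXU : X * (U * U) * U = U * (X * (U * U)) := by
    rw [← (commute_X (U * U)).eq, mul_assoc, ← (commute_X U).eq]; simp only [mul_assoc]
  have key : C f * (U * U) - U * U * C f = E * U - U * E := by
    simp only [E, sub_mul, add_mul, mul_sub, mul_add, hXU, hcU]; noncomm_ring
  have := congrArg (coeff n) key
  rw [map_sub, map_sub, coeff_C_mul, coeff_mul_C, coeff_mul n E, coeff_mul n U E,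
    sum_eq_zero (fun p hp => by rw [hE p.1 (HasAntidiagonal.antidiagonal.fst_le hp), zero_mul]),
    sum_eq_zero (fun p hp => by rw [hE p.2 (HasAntidiagonal.antidiagonal.snd_le hp), mul_zero]),
    sub_zero, sub_eq_zero, coeff_mul] at this
  simp only [U, coeff_mk] at this
  exact this

end Algebra

namespace HigherHomotopy

open DirectSum Finset

variable {R : Type*} [CommRing R] {M : ℤ → Type*} [∀ i, AddCommGroup (M i)] [∀ i, Module R (M i)]

def RestrictsTo (x : Module.End R (⨁ j, M j)) {j k : ℤ} (g : M j →ₗ[R] M k) : Prop :=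
  x ∘ₗ lof R ℤ M j = lof R ℤ M k ∘ₗ g

namespace RestrictsTo

variable {x y : Module.End R (⨁ j, M j)} {j k l : ℤ}

theorem mul {g : M j →ₗ[R] M k} {h : M k →ₗ[R] M l} (hx : RestrictsTo x g)
    (hy : RestrictsTo y h) : RestrictsTo (y * x) (h ∘ₗ g) := by
  rw [RestrictsTo, Module.End.mul_eq_comp, LinearMap.comp_assoc, hx, ← LinearMap.comp_assoc, hy,
    LinearMap.comp_assoc]

theorem add {g h : M j →ₗ[R] M k} (hx : RestrictsTo x g) (hy : RestrictsTo y h) :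
    RestrictsTo (x + y) (g + h) := by
  rw [RestrictsTo, LinearMap.add_comp, hx, hy, LinearMap.comp_add]

theorem sum_attach {σ : Type*} {s : Finset σ} {x : σ → Module.End R (⨁ j, M j)}
    {g : s → (M j →ₗ[R] M k)} (h : ∀ p : s, RestrictsTo (x p) (g p)) :
    RestrictsTo (∑ p ∈ s, x p) (∑ p ∈ s.attach, g p) := by
  rw [← Finset.sum_attach s]
  refine LinearMap.ext fun v => ?_
  simp only [LinearMap.comp_apply, LinearMap.sum_apply, map_sum]
  exact Finset.sum_congr rfl fun p _ => LinearMap.congr_fun (h p) v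

theorem eq_zero_iff {g : M j →ₗ[R] M k} (hx : RestrictsTo x g) :
    g = 0 ↔ x ∘ₗ lof R ℤ M j = 0 := by
  rw [hx]
  refine ⟨fun hg => by rw [hg, LinearMap.comp_zero], fun h => LinearMap.ext fun v => ?_⟩
  exact (map_eq_zero_iff _ (of_injective k)).1 (LinearMap.congr_fun h v)

end RestrictsTo

theorem restrictsTo_lcast_iff {x : Module.End R (⨁ j, M j)} {i i' j j' : ℤ} (hi : i = i')
    (hj : j = j') (g : M i →ₗ[R] M j) : RestrictsTo x (lcast hi hj g) ↔ RestrictsTo x g := by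
  subst hi hj; rfl

theorem restrictsTo_smul_one (w : R) (j : ℤ) :
    RestrictsTo (w • 1 : Module.End R (⨁ j, M j)) (w • LinearMap.id : M j →ₗ[R] M j) := by
  ext v; simp

theorem ext_comp_lof_sub_one {x y : Module.End R (⨁ j, M j)}
    (h : ∀ m, x ∘ₗ lof R ℤ M (m - 1) = y ∘ₗ lof R ℤ M (m - 1)) : x = y :=
  linearMap_ext R fun j => by
    obtain ⟨m, rfl⟩ : ∃ m, j = m - 1 := ⟨j + 1, by ring⟩
    exact h m

section Operators

variable (F : ∀ i : ℤ, M i →ₗ[R] M (i - 1)) (Ka : ∀ (a : ℕ) (i : ℤ), M (i - 1) →ₗ[R] M (i + 2 * a))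

def diffOp : Module.End R (⨁ j, M j) :=
  toModule R ℤ _ fun j => lof R ℤ M (j - 1) ∘ₗ F j

def homotopyOp (b : ℕ) : Module.End R (⨁ j, M j) :=
  toModule R ℤ _ fun j =>
    lof R ℤ M (j + 1 + 2 * b) ∘ₗ lcast (add_sub_cancel_right j 1) rfl (Ka b (j + 1))

def homotopySq (b : ℕ) : Module.End R (⨁ j, M j) :=
  ∑ p ∈ antidiagonal (b - 1), homotopyOp Ka p.1 * homotopyOp Ka p.2

def recOp (b : ℕ) : Module.End R (⨁ j, M j) :=
  homotopySq Ka b + diffOp F * homotopyOp Ka b + homotopyOp Ka b * diffOp F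

theorem restrictsTo_diffOp (j : ℤ) : RestrictsTo (diffOp F) (F j) :=
  LinearMap.ext fun v => toModule_lof R (φ := fun j => lof R ℤ M (j - 1) ∘ₗ F j) j v

theorem restrictsTo_homotopyOp (b : ℕ) (i : ℤ) : RestrictsTo (homotopyOp Ka b) (Ka b i) := by
  have h : RestrictsTo (homotopyOp Ka b)
      (lcast (add_sub_cancel_right (i - 1) 1) rfl (Ka b (i - 1 + 1))) :=
    LinearMap.ext fun v => by simp only [homotopyOp, LinearMap.comp_apply, toModule_lof]
  rwa [restrictsTo_lcast_iff, sub_add_cancel] at h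

theorem restrictsTo_homotopyOp_mul (b c : ℕ) (i : ℤ) {k : ℤ} (h : i + 2 * c + 1 + 2 * b = k) :
    RestrictsTo (homotopyOp Ka b * homotopyOp Ka c)
      (lcast rfl h ((Ka b (i + 2 * c + 1)).comp
        (lcast rfl (add_sub_cancel_right _ 1).symm (Ka c i)))) :=
  (restrictsTo_lcast_iff _ _ _).2 <|
    ((restrictsTo_lcast_iff _ _ _).2 (restrictsTo_homotopyOp Ka c i)).mul
      (restrictsTo_homotopyOp Ka b _)

theorem rec_iff (b : ℕ) (hb : 1 ≤ b) (i : ℤ) :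
    Rec F Ka b hb i ↔ recOp F Ka b ∘ₗ lof R ℤ M (i - 1) = 0 := by
  refine RestrictsTo.eq_zero_iff ?_
  refine ((RestrictsTo.sum_attach fun p => ?_).add ?_).add ?_
  · exact restrictsTo_homotopyOp_mul Ka _ _ i _
  · exact (restrictsTo_homotopyOp Ka b i).mul (restrictsTo_diffOp F _)
  · exact (restrictsTo_lcast_iff _ _ _).2
      ((restrictsTo_diffOp F _).mul (restrictsTo_homotopyOp Ka b _))

theorem recOp_eq_zero {b : ℕ} {hb : 1 ≤ b} (h : ∀ i, Rec F Ka b hb i) : recOp F Ka b = 0 :=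
  ext_comp_lof_sub_one fun i => by rw [(rec_iff F Ka b hb i).1 (h i), LinearMap.zero_comp]

theorem diffOp_mul_diffOp (hcomplex : ∀ j : ℤ, (F (j - 1)).comp (F j) = 0) :
    diffOp F * diffOp F = 0 :=
  linearMap_ext R fun m => by
    rw [LinearMap.zero_comp]
    exact ((restrictsTo_diffOp F m).mul (restrictsTo_diffOp F (m - 1))).eq_zero_iff.1 (hcomplex m)

theorem diffOp_mul_homotopyOp_zero_add (w : R) (K : ∀ i : ℤ, M (i - 1) →ₗ[R] M i)
    (hK0 : ∀ i : ℤ, Ka 0 i = lcast rfl (by simp) (K i))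
    (hhomotopy : ∀ j : ℤ, (K j).comp (F j) + lcast (add_sub_cancel_right j 1)
      (add_sub_cancel_right j 1) ((F (j + 1)).comp (K (j + 1))) = w • LinearMap.id) :
    diffOp F * homotopyOp Ka 0 + homotopyOp Ka 0 * diffOp F = w • 1 := by
  have hK (i : ℤ) : RestrictsTo (homotopyOp Ka 0) (K i) := by
    simpa only [hK0, restrictsTo_lcast_iff] using restrictsTo_homotopyOp Ka 0 i
  refine linearMap_ext R fun j => ?_
  have h := ((restrictsTo_diffOp F j).mul (hK j)).add <|
    (restrictsTo_lcast_iff (add_sub_cancel_right j 1) (add_sub_cancel_right j 1) _).2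
      ((hK (j + 1)).mul (restrictsTo_diffOp F (j + 1)))
  rw [hhomotopy j] at h
  rw [add_comm, h, restrictsTo_smul_one]

end Operators

end HigherHomotopy

open HigherHomotopy

theorem statement1 {R : Type*} [CommRing R] (w : R) {M : ℤ → Type*}
    [∀ i, AddCommGroup (M i)] [∀ i, Module R (M i)]
    (F : ∀ i : ℤ, M i →ₗ[R] M (i - 1))
    (K : ∀ i : ℤ, M (i - 1) →ₗ[R] M i)
    (Ka : ∀ (a : ℕ) (i : ℤ), M (i - 1) →ₗ[R] M (i + 2 * a))
    (hK0 : ∀ i : ℤ, Ka 0 i = lcast rfl (show i = i + 2 * ((0 : ℕ) : ℤ) by simp) (K i))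
    (a : ℕ) (ha : 1 ≤ a) (i : ℤ)
    (hcomplex : ∀ j : ℤ, (F (j - 1)).comp (F j) = 0)
    (hhomotopy : ∀ j : ℤ,
      (K j).comp (F j)
        + lcast (show j + 1 - 1 = j by ring) (show j + 1 - 1 = j by ring)
            ((F (j + 1)).comp (K (j + 1)))
      = w • (LinearMap.id : M j →ₗ[R] M j))
    (hrec : ∀ (a' : ℕ) (ha' : 1 ≤ a'), a' ≤ a - 1 → ∀ i' : ℤ, Rec F Ka a' ha' i')
    (hrecprev : Rec F Ka a ha (i - 1)) :
    (F (i + 2 * a - 1)).comp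
      ((∑ p ∈ (Finset.HasAntidiagonal.antidiagonal (a - 1)).attach,
          lcast rfl
            (show i + 2 * (p.1.2 : ℤ) + 1 + 2 * (p.1.1 : ℤ) = i + 2 * (a : ℤ) - 1 by
              have hp := Finset.HasAntidiagonal.mem_antidiagonal.mp p.2
              omega)
            ((Ka p.1.1 (i + 2 * (p.1.2 : ℤ) + 1)).comp
              (lcast rfl (show i + 2 * (p.1.2 : ℤ) = i + 2 * (p.1.2 : ℤ) + 1 - 1 by ring)
                (Ka p.1.2 i))))
        + lcast rfl (show i - 1 + 2 * (a : ℤ) = i + 2 * (a : ℤ) - 1 by ring)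
            ((Ka a (i - 1)).comp (F (i - 1)))) = 0 := by
  have hcomm : Commute (diffOp F) (homotopySq Ka a) :=
    commute_sum_antidiagonal_mul_of_anticomm (fun x => (Commute.one_left x).smul_left w)
      (homotopyOp Ka) (a - 1) (diffOp_mul_homotopyOp_zero_add F Ka w K hK0 hhomotopy)
      fun b hb hba => recOp_eq_zero F Ka (hrec b hb hba)
  have hfactor : diffOp F * (homotopySq Ka a + homotopyOp Ka a * diffOp F)
      = recOp F Ka a * diffOp F := by
    rw [recOp, add_mul, add_mul, mul_assoc (homotopyOp Ka a), diffOp_mul_diffOp F hcomplex,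
      mul_zero, add_zero, mul_add, hcomm.eq, mul_assoc]
  refine (RestrictsTo.eq_zero_iff
    (x := diffOp F * (homotopySq Ka a + homotopyOp Ka a * diffOp F)) ?_).2 ?_
  · refine RestrictsTo.mul (RestrictsTo.add ?_ ?_) (restrictsTo_diffOp F _)
    · exact RestrictsTo.sum_attach fun p => restrictsTo_homotopyOp_mul Ka _ _ i _
    · exact (restrictsTo_lcast_iff _ _ _).2
        ((restrictsTo_diffOp F _).mul (restrictsTo_homotopyOp Ka a _))
  · rw [hfactor, Module.End.mul_eq_comp, LinearMap.comp_assoc, restrictsTo_diffOp F (i - 1),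
      ← LinearMap.comp_assoc, (rec_iff F Ka a ha (i - 1)).1 hrecprev, LinearMap.zero_comp]
end

section
/- Suppose M_i = 0 for all i < −1, every M_i is a projective R-module, F_{j−1} ∘ F_j = 0 for all j ∈ ℤ, the complex is exact at every degree j ≥ 1 (ker F_j = range F_{j+1} for all j ≥ 1), and (K_i)_{i∈ℤ} is a null-homotopy for w. Then there exists a family of R-linear maps K^{(a)}_i : M_{i−1} → M_{i+2a} for all integers a ≥ 1 and i ∈ ℤ such that, setting K^{(0)}_i := K_i, the higher-homotopy recursion Rec(a, i) holds for all a ≥ 1 and all i ∈ ℤ. -/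
open DirectSum Finset

theorem Int.exists_forall_of_exists_update {β : ℤ → Type*} [∀ i, Nonempty (β i)]
    (P : ℤ → (∀ i, β i) → Prop)
    (hlocal : ∀ i f g, (∀ j ≤ i, f j = g j) → P i f → P i g)
    (hneg : ∀ i < 0, ∀ f, P i f)
    (hstep : ∀ i f, 0 ≤ i → (∀ j < i, P j f) → ∃ x, P i (Function.update f i x)) :
    ∃ f, ∀ i, P i f := by
  classical
  let next (f : ∀ i, β i) (n : ℕ) : ∀ i, β i :=
    if h : ∃ x, P n (Function.update f n x) then Function.update f n h.choose else f
  let g (n : ℕ) : ∀ i, β i := Nat.rec (fun _ => Classical.arbitrary _) (fun n f => next f n) n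
  have g_stable : ∀ n N : ℕ, n ≤ N → ∀ j : ℤ, j < n → g N j = g n j := by
    intro n N hnN j hj
    induction N, hnN using Nat.le_induction with
    | base => rfl
    | succ N _ ih =>
      change next (g N) N j = _
      unfold next
      split_ifs
      · rw [Function.update_of_ne (by omega), ih]
      · exact ih
  have g_good : ∀ n : ℕ, ∀ j : ℤ, j < n → P j (g n) := by
    intro n
    induction n with
    | zero => exact fun j hj => hneg j hj _
    | succ n ih =>
      have hex := hstep n (g n) (by omega) ih
      have hg : g (n + 1) = Function.update (g n) n hex.choose := dif_pos hex
      intro j hj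
      rcases (show j < n ∨ j = n by omega) with hj | rfl
      · refine hlocal j (g n) _ (fun j' hj' => ?_) (ih j hj)
        rw [hg, Function.update_of_ne (by omega)]
      · rw [hg]
        exact hex.choose_spec
  refine ⟨fun i => g (i.toNat + 1) i, fun i => ?_⟩
  refine hlocal i (g (i.toNat + 1)) _ (fun j hj => ?_) (g_good (i.toNat + 1) i (by omega))
  exact g_stable (j.toNat + 1) (i.toNat + 1) (by omega) j (by omega)

open PowerSeries in
theorem commute_sum_antidiagonal_mul {A : Type*} [Ring A] {D c : A} {K : ℕ → A} {n : ℕ}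
    (hc : ∀ b, Commute c (K b)) (h₀ : D * K 0 + K 0 * D = c)
    (h : ∀ b < n, ∑ p ∈ antidiagonal b, K p.1 * K p.2 + D * K (b + 1) + K (b + 1) * D = 0) :
    Commute D (∑ p ∈ antidiagonal n, K p.1 * K p.2) := by
  set Y : A⟦X⟧ := mk K
  set E : A⟦X⟧ := X * (Y * Y) + C D * Y + Y * C D - C c
  have hcY : Commute (C c) Y := by
    ext m; simp only [coeff_C_mul, coeff_mul_C, Y, coeff_mk]; exact hc m
  have key : C D * (Y * Y) - Y * Y * C D = E * Y - Y * E := by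
    simp only [E, sub_mul, add_mul, mul_sub, mul_add, mul_assoc]
    rw [← mul_assoc Y X, (commute_X Y).eq]
    simp only [mul_assoc]
    rw [hcY.eq]
    abel
  have hE : ∀ m ≤ n, coeff m E = 0 := by
    intro m hm
    rw [map_sub, map_add, map_add, coeff_C_mul, coeff_mul_C, coeff_C]
    rcases m with _ | b
    · simp [Y, h₀]
    · rw [coeff_succ_X_mul, coeff_mul]
      simpa [Y] using h b (by omega)
  have hEY : ∑ p ∈ antidiagonal n, coeff p.1 E * coeff p.2 Y = 0 :=
    sum_eq_zero fun p hp => by rw [hE p.1 (HasAntidiagonal.antidiagonal.fst_le hp), zero_mul]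
  have hYE : ∑ p ∈ antidiagonal n, coeff p.1 Y * coeff p.2 E = 0 :=
    sum_eq_zero fun p hp => by rw [hE p.2 (HasAntidiagonal.antidiagonal.snd_le hp), mul_zero]
  have hn := congrArg (coeff n) key
  rw [map_sub, map_sub, coeff_C_mul, coeff_mul_C, coeff_mul n E, coeff_mul n Y E, hEY, hYE,
    sub_zero, sub_eq_zero, coeff_mul] at hn
  simp only [Y, coeff_mk] at hn
  exact hn

theorem Module.Projective.exists_comp_eq_of_range_le {R P M N : Type*} [Semiring R]
    [AddCommMonoid P] [Module R P] [Module.Projective R P] [AddCommMonoid M] [Module R M]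
    [AddCommMonoid N] [Module R N] {f : M →ₗ[R] N} {g : P →ₗ[R] N}
    (h : LinearMap.range g ≤ LinearMap.range f) : ∃ l : P →ₗ[R] M, f ∘ₗ l = g := by
  obtain ⟨l, hl⟩ := Module.projective_lifting_property f.rangeRestrict
    (g.codRestrict _ fun x => h ⟨x, rfl⟩) f.surjective_rangeRestrict
  exact ⟨l, congrArg ((LinearMap.range f).subtype ∘ₗ ·) hl⟩

section Graded

variable {ι R : Type*} [DecidableEq ι] [Semiring R] {M : ι → Type*}
  [∀ i, AddCommMonoid (M i)] [∀ i, Module R (M i)]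

noncomputable def gradedMap (τ : ι → ι) (g : ∀ i, M i →ₗ[R] M (τ i)) :
    Module.End R (⨁ i, M i) :=
  toModule R ι _ fun i => lof R ι M (τ i) ∘ₗ g i

def HasComponent (Φ : Module.End R (⨁ i, M i)) {i j : ι} (f : M i →ₗ[R] M j) : Prop :=
  Φ ∘ₗ lof R ι M i = lof R ι M j ∘ₗ f

theorem hasComponent_gradedMap (τ : ι → ι) (g : ∀ i, M i →ₗ[R] M (τ i)) (i : ι) :
    HasComponent (gradedMap τ g) (g i) :=
  LinearMap.ext fun x => toModule_lof R i x (φ := fun i => lof R ι M (τ i) ∘ₗ g i)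

namespace HasComponent

variable {Φ Ψ : Module.End R (⨁ i, M i)} {i j k : ι}

theorem mul {f : M i →ₗ[R] M j} {g : M j →ₗ[R] M k} (hf : HasComponent Φ f)
    (hg : HasComponent Ψ g) : HasComponent (Ψ * Φ) (g ∘ₗ f) := by
  unfold HasComponent at *
  rw [Module.End.mul_eq_comp, LinearMap.comp_assoc, hf, ← LinearMap.comp_assoc, hg,
    LinearMap.comp_assoc]

theorem add {f g : M i →ₗ[R] M j} (hf : HasComponent Φ f) (hg : HasComponent Ψ g) :
    HasComponent (Φ + Ψ) (f + g) := by
  unfold HasComponent at *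
  rw [LinearMap.add_comp, LinearMap.comp_add, hf, hg]

theorem sum {κ : Type*} {s : Finset κ} {Φ : κ → Module.End R (⨁ i, M i)}
    {f : κ → M i →ₗ[R] M j} (h : ∀ p ∈ s, HasComponent (Φ p) (f p)) :
    HasComponent (∑ p ∈ s, Φ p) (∑ p ∈ s, f p) := by
  refine LinearMap.ext fun x => ?_
  simp only [LinearMap.comp_apply, LinearMap.sum_apply, map_sum]
  exact Finset.sum_congr rfl fun p hp => LinearMap.congr_fun (h p hp) x

theorem comp_lof {f : M i →ₗ[R] M j} (hf : HasComponent Φ f) :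
    Φ ∘ₗ lof R ι M i = lof R ι M j ∘ₗ f :=
  hf

theorem ext {f g : M i →ₗ[R] M j} (hf : HasComponent Φ f) (hg : HasComponent Φ g) :
    f = g := by
  ext x
  exact DirectSum.of_injective j (LinearMap.congr_fun (hf.symm.trans hg) x)

theorem eq_zero {f : M i →ₗ[R] M j} (hf : HasComponent 0 f) : f = 0 :=
  hf.ext (LinearMap.comp_zero _).symm

end HasComponent

end Graded

section Complex

variable {R : Type*} [CommRing R] {M : ℤ → Type*} [∀ i, AddCommGroup (M i)]
  [∀ i, Module R (M i)]

theorem hasComponent_lcast_iff {Φ : Module.End R (⨁ i, M i)} {i i' j j' : ℤ} (hi : i = i')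
    (hj : j = j') (f : M i →ₗ[R] M j) :
    HasComponent Φ (lcast hi hj f) ↔ HasComponent Φ f := by
  subst hi hj; rfl

theorem lof_comp_lcast {i j j' : ℤ} (hj : j = j') (f : M i →ₗ[R] M j) :
    lof R ℤ M j' ∘ₗ lcast rfl hj f = lof R ℤ M j ∘ₗ f := by
  subst hj; rfl

noncomputable def totalHom (d : ℤ) (k : ∀ i, M (i - 1) →ₗ[R] M (i + d)) :
    Module.End R (⨁ i, M i) :=
  gradedMap (fun j => j + 1 + d) fun j => lcast (add_sub_cancel_right j 1) rfl (k (j + 1))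

theorem hasComponent_totalHom (d : ℤ) (k : ∀ i, M (i - 1) →ₗ[R] M (i + d)) (i : ℤ) :
    HasComponent (totalHom d k) (k i) := by
  have h := hasComponent_gradedMap (fun j => j + 1 + d)
    (fun j => lcast (add_sub_cancel_right j 1) rfl (k (j + 1))) (i - 1)
  rw [hasComponent_lcast_iff] at h
  have reindex : ∀ i', i' = i → HasComponent (totalHom d k) (k i') →
      HasComponent (totalHom d k) (k i) := by
    rintro _ rfl h; exact h
  exact reindex _ (sub_add_cancel i 1) h

section Differential

variable (F : ∀ i : ℤ, M i →ₗ[R] M (i - 1))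

noncomputable def totalDiff : Module.End R (⨁ i, M i) :=
  gradedMap (fun i => i - 1) F

theorem hasComponent_totalDiff (i : ℤ) : HasComponent (totalDiff F) (F i) :=
  hasComponent_gradedMap _ F i

theorem totalDiff_mul_self (hcomplex : ∀ j : ℤ, (F (j - 1)).comp (F j) = 0) :
    totalDiff F * totalDiff F = 0 := by
  refine DirectSum.linearMap_ext R fun j => ?_
  rw [((hasComponent_totalDiff F j).mul (hasComponent_totalDiff F (j - 1))).comp_lof,
    hcomplex, LinearMap.comp_zero, LinearMap.zero_comp]

theorem add_totalDiff_mul_totalHom_comp_lof (S : Module.End R (⨁ i, M i)) {d : ℤ}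
    (k : ∀ i, M (i - 1) →ₗ[R] M (i + d)) (i : ℤ) :
    (S + totalDiff F * totalHom d k + totalHom d k * totalDiff F) ∘ₗ lof R ℤ M (i - 1)
      = S ∘ₗ lof R ℤ M (i - 1) + lof R ℤ M (i + d - 1) ∘ₗ (F (i + d) ∘ₗ k i)
        + lof R ℤ M (i - 1 + d) ∘ₗ (k (i - 1) ∘ₗ F (i - 1)) := by
  rw [LinearMap.add_comp, LinearMap.add_comp,
    ((hasComponent_totalHom d k i).mul (hasComponent_totalDiff F _)).comp_lof,
    ((hasComponent_totalDiff F (i - 1)).mul (hasComponent_totalHom d k (i - 1))).comp_lof]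

theorem exists_nullHomotopy_of_commute
    (hzero : ∀ i : ℤ, i < -1 → Subsingleton (M i))
    (hproj : ∀ i : ℤ, Module.Projective R (M i))
    (hcomplex : ∀ j : ℤ, (F (j - 1)).comp (F j) = 0)
    (hexact : ∀ m : ℤ, 2 ≤ m → LinearMap.ker (F (m - 1)) ≤ LinearMap.range (F m))
    {d : ℤ} (hd : 2 ≤ d) {S : Module.End R (⨁ i, M i)} (hS : Commute (totalDiff F) S)
    (hShom : ∀ i, ∃ s : M (i - 1) →ₗ[R] M (i + d - 1), HasComponent S s) :
    ∃ k : ∀ i, M (i - 1) →ₗ[R] M (i + d),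
      S + totalDiff F * totalHom d k + totalHom d k * totalDiff F = 0 := by
  suffices h : ∃ k : ∀ i, M (i - 1) →ₗ[R] M (i + d), ∀ i,
      (S + totalDiff F * totalHom d k + totalHom d k * totalDiff F) ∘ₗ lof R ℤ M (i - 1)
        = 0 by
    obtain ⟨k, hk⟩ := h
    refine ⟨k, DirectSum.linearMap_ext R fun j => ?_⟩
    have hj := hk (j + 1)
    rw [add_sub_cancel_right] at hj
    rw [hj, LinearMap.zero_comp]
  refine Int.exists_forall_of_exists_update _ (fun i f g hfg h => ?_) (fun i hi f => ?_)
    (fun i k hi hprev => ?_)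
  · simp only [add_totalDiff_mul_totalHom_comp_lof] at h ⊢
    rwa [← hfg i le_rfl, ← hfg (i - 1) (by omega)]
  · have := hzero (i - 1) (by omega)
    exact Subsingleton.elim _ _
  · obtain ⟨s, hs⟩ := hShom i
    -- the new component `x` must solve `F (i + d) ∘ₗ x = -T`; `T` is a cycle thanks to the
    -- relation one degree lower
    set T := s + lcast rfl (show i - 1 + d = i + d - 1 by ring) (k (i - 1) ∘ₗ F (i - 1))
    have hT : lof R ℤ M (i + d - 1) ∘ₗ T
        = (S + totalHom d k * totalDiff F) ∘ₗ lof R ℤ M (i - 1) := by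
      rw [LinearMap.comp_add, lof_comp_lcast, LinearMap.add_comp, hs.comp_lof,
        ((hasComponent_totalDiff F (i - 1)).mul (hasComponent_totalHom d k (i - 1))).comp_lof]
    have hFT : F (i + d - 1) ∘ₗ T = 0 := by
      suffices h : lof R ℤ M (i + d - 1 - 1) ∘ₗ (F (i + d - 1) ∘ₗ T) = 0 from
        LinearMap.ext fun x =>
          DirectSum.of_injective _ (by simpa [lof_eq_of] using LinearMap.congr_fun h x)
      calc lof R ℤ M (i + d - 1 - 1) ∘ₗ (F (i + d - 1) ∘ₗ T)
          = (totalDiff F * (S + totalHom d k * totalDiff F)) ∘ₗ lof R ℤ M (i - 1) := by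
            rw [← LinearMap.comp_assoc, ← (hasComponent_totalDiff F _).comp_lof,
              LinearMap.comp_assoc, hT]
            rfl
        _ = ((S + totalDiff F * totalHom d k + totalHom d k * totalDiff F) * totalDiff F
              - totalHom d k * (totalDiff F * totalDiff F)) ∘ₗ lof R ℤ M (i - 1) := by
            rw [mul_add, hS.eq]
            noncomm_ring
        _ = 0 := by
            rw [totalDiff_mul_self F hcomplex, mul_zero, sub_zero, Module.End.mul_eq_comp,
              LinearMap.comp_assoc, (hasComponent_totalDiff F (i - 1)).comp_lof,
              ← LinearMap.comp_assoc, hprev (i - 1) (by omega), LinearMap.zero_comp]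
    have := hproj (i - 1)
    have hlift : LinearMap.range (-T) ≤ LinearMap.range (F (i + d)) := by
      rintro _ ⟨y, rfl⟩
      refine hexact (i + d) (by omega) ?_
      simpa using LinearMap.congr_fun hFT y
    obtain ⟨x, hx⟩ := Module.Projective.exists_comp_eq_of_range_le hlift
    refine ⟨x, ?_⟩
    rw [add_totalDiff_mul_totalHom_comp_lof, Function.update_self,
      Function.update_of_ne (by omega : i - 1 ≠ i), hx, hs.comp_lof,
      ← lof_comp_lcast (show i - 1 + d = i + d - 1 by ring)]
    simp only [T, LinearMap.comp_neg, LinearMap.comp_add]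
    abel

variable (KK : ∀ (b : ℕ) (i : ℤ), M (i - 1) →ₗ[R] M (i + 2 * b))

noncomputable def quadTerm (n : ℕ) : Module.End R (⨁ i, M i) :=
  ∑ p ∈ antidiagonal n, totalHom (2 * p.1) (KK p.1) * totalHom (2 * p.2) (KK p.2)

/-- The quadratic sum in `Rec F KK a ha i`. -/
def quadComponent (a : ℕ) (ha : 1 ≤ a) (i : ℤ) :
    M (i - 1) →ₗ[R] M (i + 2 * (a : ℤ) - 1) :=
  ∑ p ∈ (Finset.HasAntidiagonal.antidiagonal (a - 1)).attach,
      lcast rfl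
        (show i + 2 * (p.1.2 : ℤ) + 1 + 2 * (p.1.1 : ℤ) = i + 2 * (a : ℤ) - 1 by
          have hp := Finset.HasAntidiagonal.mem_antidiagonal.mp p.2
          omega)
        ((KK p.1.1 (i + 2 * (p.1.2 : ℤ) + 1)).comp
          (lcast rfl (show i + 2 * (p.1.2 : ℤ) = i + 2 * (p.1.2 : ℤ) + 1 - 1 by ring)
            (KK p.1.2 i)))

theorem hasComponent_quadTerm (a : ℕ) (ha : 1 ≤ a) (i : ℤ) :
    HasComponent (quadTerm KK (a - 1)) (quadComponent KK a ha i) := by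
  rw [quadTerm, ← Finset.sum_attach]
  refine HasComponent.sum fun p _ => (hasComponent_lcast_iff _ _ _).mpr ?_
  exact ((hasComponent_lcast_iff _ _ _).mpr (hasComponent_totalHom _ _ i)).mul
    (hasComponent_totalHom _ _ _)

theorem rec_of_quadTerm_add_eq_zero (a : ℕ) (ha : 1 ≤ a)
    (h : quadTerm KK (a - 1) + totalDiff F * totalHom (2 * a) (KK a)
      + totalHom (2 * a) (KK a) * totalDiff F = 0) (i : ℤ) : Rec F KK a ha i := by
  refine HasComponent.eq_zero (h ▸ ?_)
  refine ((hasComponent_quadTerm KK a ha i).add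
    ((hasComponent_totalHom _ (KK a) i).mul (hasComponent_totalDiff F _))).add ?_
  exact (hasComponent_lcast_iff _ _ _).mpr
    ((hasComponent_totalDiff F (i - 1)).mul (hasComponent_totalHom _ (KK a) (i - 1)))

theorem quadTerm_congr {KK KK' : ∀ (b : ℕ) (i : ℤ), M (i - 1) →ₗ[R] M (i + 2 * b)}
    {n : ℕ} (h : ∀ b ≤ n, KK b = KK' b) : quadTerm KK n = quadTerm KK' n :=
  Finset.sum_congr rfl fun p hp => by
    rw [h p.1 (Finset.HasAntidiagonal.antidiagonal.fst_le hp),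
      h p.2 (Finset.HasAntidiagonal.antidiagonal.snd_le hp)]

theorem totalDiff_mul_totalHom_add_eq_smul {K : ∀ i : ℤ, M (i - 1) →ₗ[R] M i} {w : R}
    (hhomotopy : ∀ j : ℤ,
      (K j).comp (F j)
        + lcast (show j + 1 - 1 = j by ring) (show j + 1 - 1 = j by ring)
            ((F (j + 1)).comp (K (j + 1)))
      = w • (LinearMap.id : M j →ₗ[R] M j))
    {d : ℤ} (hd : d = 0) {k : ∀ i, M (i - 1) →ₗ[R] M (i + d)}
    (hk : ∀ i, k i = lcast rfl (by omega) (K i)) :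
    totalDiff F * totalHom d k + totalHom d k * totalDiff F = w • 1 := by
  have hK (i : ℤ) : HasComponent (totalHom d k) (K i) := by
    rw [← hasComponent_lcast_iff rfl (show i = i + d by omega), ← hk]
    exact hasComponent_totalHom d k i
  refine DirectSum.linearMap_ext R fun j => ?_
  have h := ((hasComponent_totalDiff F j).mul (hK j)).add
    ((hasComponent_lcast_iff (show j + 1 - 1 = j by ring) (show j + 1 - 1 = j by ring) _).mpr
      ((hK (j + 1)).mul (hasComponent_totalDiff F (j + 1))))
  rw [hhomotopy j] at h
  rw [add_comm, h.comp_lof, LinearMap.comp_smul, LinearMap.smul_comp, LinearMap.comp_id]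
  rfl

def HigherHomotopyRel (K : ∀ i : ℤ, M (i - 1) →ₗ[R] M i) : ℕ → Prop
  | 0 => ∀ i, KK 0 i = lcast rfl (show i = i + 2 * ((0 : ℕ) : ℤ) by simp) (K i)
  | n + 1 => quadTerm KK n + totalDiff F * totalHom (2 * (n + 1 : ℕ)) (KK (n + 1))
      + totalHom (2 * (n + 1 : ℕ)) (KK (n + 1)) * totalDiff F = 0

theorem HigherHomotopyRel.congr {K : ∀ i : ℤ, M (i - 1) →ₗ[R] M i}
    {KK KK' : ∀ (b : ℕ) (i : ℤ), M (i - 1) →ₗ[R] M (i + 2 * b)} {a : ℕ}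
    (h : ∀ b ≤ a, KK b = KK' b) (hKK : HigherHomotopyRel F KK K a) :
    HigherHomotopyRel F KK' K a := by
  cases a with
  | zero => rwa [HigherHomotopyRel, ← h 0 le_rfl]
  | succ n =>
    rwa [HigherHomotopyRel, ← quadTerm_congr fun b hb => h b (by omega), ← h (n + 1) le_rfl]

theorem ker_le_range_of_exact
    (hexact : ∀ j : ℤ, 1 ≤ j →
      LinearMap.ker (F j)
        = LinearMap.range (lcast rfl (show j + 1 - 1 = j by ring) (F (j + 1))))
    (m : ℤ) (hm : 2 ≤ m) : LinearMap.ker (F (m - 1)) ≤ LinearMap.range (F m) := by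
  rw [hexact (m - 1) (by omega)]
  have reindex : ∀ m' (h : m' - 1 = m - 1), m' = m →
      LinearMap.range (lcast rfl h (F m')) ≤ LinearMap.range (F m) := by
    rintro _ _ rfl; exact le_rfl
  exact reindex _ _ (sub_add_cancel m 1)

theorem exists_higherHomotopyRel_succ
    (hzero : ∀ i : ℤ, i < -1 → Subsingleton (M i))
    (hproj : ∀ i : ℤ, Module.Projective R (M i))
    (hcomplex : ∀ j : ℤ, (F (j - 1)).comp (F j) = 0)
    (hexact : ∀ m : ℤ, 2 ≤ m → LinearMap.ker (F (m - 1)) ≤ LinearMap.range (F m))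
    {K : ∀ i : ℤ, M (i - 1) →ₗ[R] M i} {w : R}
    (hhomotopy : ∀ j : ℤ,
      (K j).comp (F j)
        + lcast (show j + 1 - 1 = j by ring) (show j + 1 - 1 = j by ring)
            ((F (j + 1)).comp (K (j + 1)))
      = w • (LinearMap.id : M j →ₗ[R] M j))
    {n : ℕ} (h : ∀ b ≤ n, HigherHomotopyRel F KK K b) :
    ∃ k : ∀ i, M (i - 1) →ₗ[R] M (i + 2 * (n + 1 : ℕ)),
      quadTerm KK n + totalDiff F * totalHom _ k + totalHom _ k * totalDiff F = 0 := by
  have hcomm : Commute (totalDiff F) (quadTerm KK n) :=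
    commute_sum_antidiagonal_mul (K := fun b => totalHom (2 * (b : ℤ)) (KK b)) (c := w • 1)
      (fun _ => (Commute.one_left _).smul_left w)
      (totalDiff_mul_totalHom_add_eq_smul F hhomotopy (k := KK 0) (by simp) (h 0 (Nat.zero_le n)))
      fun b hb => h (b + 1) hb
  exact exists_nullHomotopy_of_commute F hzero hproj hcomplex hexact (by omega) hcomm
    fun i => ⟨_, hasComponent_quadTerm KK (n + 1) (by omega) i⟩


theorem exists_forall_higherHomotopyRel
    (hzero : ∀ i : ℤ, i < -1 → Subsingleton (M i))
    (hproj : ∀ i : ℤ, Module.Projective R (M i))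
    (hcomplex : ∀ j : ℤ, (F (j - 1)).comp (F j) = 0)
    (hexact : ∀ m : ℤ, 2 ≤ m → LinearMap.ker (F (m - 1)) ≤ LinearMap.range (F m))
    {K : ∀ i : ℤ, M (i - 1) →ₗ[R] M i} {w : R}
    (hhomotopy : ∀ j : ℤ,
      (K j).comp (F j)
        + lcast (show j + 1 - 1 = j by ring) (show j + 1 - 1 = j by ring)
            ((F (j + 1)).comp (K (j + 1)))
      = w • (LinearMap.id : M j →ₗ[R] M j)) :
    ∃ KK : ∀ (b : ℕ) (i : ℤ), M (i - 1) →ₗ[R] M (i + 2 * b),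
      ∀ a, HigherHomotopyRel F KK K a := by
  suffices h : ∃ f : ∀ z : ℤ, ∀ i : ℤ, M (i - 1) →ₗ[R] M (i + 2 * z),
      ∀ z, ∀ a : ℕ, (a : ℤ) = z → HigherHomotopyRel F (fun b => f b) K a by
    obtain ⟨f, hf⟩ := h
    exact ⟨fun b => f b, fun a => hf a a rfl⟩
  refine Int.exists_forall_of_exists_update _ (fun z f g hfg h a ha => ?_)
    (fun z hz f a ha => by omega) (fun z f hz hprev => ?_)
  · exact (h a ha).congr F fun b hb => hfg b (by omega)
  obtain ⟨a, rfl⟩ := Int.eq_ofNat_of_zero_le hz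
  cases a with
  | zero =>
    refine ⟨fun i => lcast rfl (by simp) (K i), fun a ha => ?_⟩
    obtain rfl : a = 0 := by omega
    intro i
    simp only [Function.update_self]
  | succ n =>
    obtain ⟨k, hk⟩ := exists_higherHomotopyRel_succ F (fun b => f b) (n := n) hzero hproj
      hcomplex hexact hhomotopy fun b hb => hprev (b : ℤ) (by omega) b rfl
    refine ⟨k, fun a ha => ?_⟩
    obtain rfl : a = n + 1 := by omega
    simp only [HigherHomotopyRel, Function.update_self]
    rwa [quadTerm_congr fun b hb => Function.update_of_ne (by omega) _ _]

end Differential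

end Complex

/-- existence of the higher homotopies. -/
theorem statement2 {R : Type*} [CommRing R] (w : R) {M : ℤ → Type*}
    [∀ i, AddCommGroup (M i)] [∀ i, Module R (M i)]
    (F : ∀ i : ℤ, M i →ₗ[R] M (i - 1))
    (K : ∀ i : ℤ, M (i - 1) →ₗ[R] M i)
    (hzero : ∀ i : ℤ, i < -1 → Subsingleton (M i))
    (hproj : ∀ i : ℤ, Module.Projective R (M i))
    (hcomplex : ∀ j : ℤ, (F (j - 1)).comp (F j) = 0)
    (hexact : ∀ j : ℤ, 1 ≤ j →
      LinearMap.ker (F j)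
        = LinearMap.range (lcast rfl (show j + 1 - 1 = j by ring) (F (j + 1))))
    (hhomotopy : ∀ j : ℤ,
      (K j).comp (F j)
        + lcast (show j + 1 - 1 = j by ring) (show j + 1 - 1 = j by ring)
            ((F (j + 1)).comp (K (j + 1)))
      = w • (LinearMap.id : M j →ₗ[R] M j)) :
    ∃ Ka : ∀ (a : ℕ) (i : ℤ), M (i - 1) →ₗ[R] M (i + 2 * a),
      (∀ i : ℤ, Ka 0 i = lcast rfl (show i = i + 2 * ((0 : ℕ) : ℤ) by simp) (K i)) ∧
      ∀ (a : ℕ) (ha : 1 ≤ a) (i : ℤ), Rec F Ka a ha i := by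
  obtain ⟨KK, hKK⟩ := exists_forall_higherHomotopyRel F hzero hproj hcomplex
    (ker_le_range_of_exact F hexact) hhomotopy
  refine ⟨KK, hKK 0, fun a ha i => ?_⟩
  obtain ⟨n, rfl⟩ := Nat.exists_eq_add_of_le' ha
  exact rec_of_quadTerm_add_eq_zero F KK (n + 1) ha (hKK (n + 1)) i
end

section
/- Let w ∈ R be a nonzerodivisor and let (A, B) be a matrix factorization of w of size n that is an asymptotically periodic presentation with levels a, b : Fin n → ℕ and shift d ∈ ℕ. Assume moreover that for all s ∈ R and k ∈ ℕ, if w·s ∈ P^{d+k} then s ∈ P^k. Then for every k ∈ ℕ the induced two-periodic sequence is exact modulo w: for every vector v : Fin n → R with v_j ∈ P^{b_j + k} for all j and with every component of B·v lying in the principal ideal (w), there exists u : Fin n → R with u_j ∈ P^{a_j + k} for all j and v = A·u. -/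
namespace Ideal

variable {R : Type*} [CommRing R] (P : Ideal R)

theorem mul_mem_pow_of_mem_zpowNat {x y : R} {e : ℤ} {m N : ℕ} (hx : x ∈ P.zpowNat e)
    (hy : y ∈ P ^ m) (hN : (N : ℤ) ≤ e + m) : x * y ∈ P ^ N := by
  have hle : N ≤ e.toNat + m := by have := Int.self_le_toNat e; omega
  exact pow_le_pow_right hle (pow_add P e.toNat m ▸ mul_mem_mul hx hy)

end Ideal

namespace Matrix

variable {R ι κ : Type*} [CommRing R] [Fintype κ]

theorem mulVec_mem_pow_of_mem_zpowNat (P : Ideal R) {B : Matrix ι κ R} {v : κ → R}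
    {c : ι → ℕ} {e : κ → ℕ} {k : ℕ} (hB : ∀ i j, B i j ∈ P.zpowNat ((c i : ℤ) - e j))
    (hv : ∀ j, v j ∈ P ^ (e j + k)) (i : ι) : B.mulVec v i ∈ P ^ (c i + k) :=
  Ideal.sum_mem _ fun j _ ↦ P.mul_mem_pow_of_mem_zpowNat (hB i j) (hv j) (by push_cast; omega)

theorem eq_mulVec_of_mulVec_eq_smul [DecidableEq κ] {w : R} (hw : ∀ r : R, w * r = 0 → r = 0)
    {A B : Matrix κ κ R} (hAB : A * B = w • (1 : Matrix κ κ R)) {u v : κ → R}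
    (hBv : B.mulVec v = w • u) : v = A.mulVec u := by
  have hw_smul : w • v = w • A.mulVec u := by
    rw [← mulVec_smul, ← hBv, mulVec_mulVec, hAB, smul_mulVec, one_mulVec]
  funext i
  exact sub_eq_zero.mp <| hw _ <| by rw [mul_sub, sub_eq_zero]; exact congrFun hw_smul i

end Matrix

theorem statement8_general {R : Type*} [CommRing R] (P : Ideal R) (w : R)
    (hw : ∀ r : R, w * r = 0 → r = 0)
    {n : ℕ} (A B : Matrix (Fin n) (Fin n) R)
    (hAB : A * B = w • (1 : Matrix (Fin n) (Fin n) R))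
    (a b : Fin n → ℕ) (d : ℕ)
    (hB : ∀ i j, B i j ∈ P.zpowNat ((a i : ℤ) + (d : ℤ) - (b j : ℤ)))
    (hreg : ∀ (s : R) (k : ℕ), w * s ∈ P ^ (d + k) → s ∈ P ^ k) :
    ∀ (k : ℕ) (v : Fin n → R),
      (∀ j, v j ∈ P ^ (b j + k)) →
      (∀ i, B.mulVec v i ∈ Ideal.span {w}) →
      ∃ u : Fin n → R, (∀ j, u j ∈ P ^ (a j + k)) ∧ v = A.mulVec u := by
  intro k v hv hBv
  choose u hu using fun i ↦ Ideal.mem_span_singleton.mp (hBv i)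
  have hBv_mem : ∀ i, B.mulVec v i ∈ P ^ (d + (a i + k)) := fun i ↦ by
    have hB' : ∀ i j, B i j ∈ P.zpowNat (((d + a i : ℕ) : ℤ) - b j) := fun i j ↦ by
      simpa [add_comm] using hB i j
    simpa [add_assoc] using Matrix.mulVec_mem_pow_of_mem_zpowNat P hB' hv i
  refine ⟨u, fun i ↦ hreg _ _ (hu i ▸ hBv_mem i), ?_⟩
  exact Matrix.eq_mulVec_of_mulVec_eq_smul hw hAB (funext hu)

/-- exactness modulo `w` of the two-periodic sequence induced by an
asymptotically periodic matrix factorization. -/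
theorem statement8 {R : Type*} [CommRing R] (P : Ideal R) (w : R)
    (hw : ∀ r : R, w * r = 0 → r = 0)
    {n : ℕ} (A B : Matrix (Fin n) (Fin n) R)
    (hAB : A * B = w • (1 : Matrix (Fin n) (Fin n) R))
    (hBA : B * A = w • (1 : Matrix (Fin n) (Fin n) R))
    (a b : Fin n → ℕ) (d : ℕ)
    (hA : ∀ i j, A i j ∈ P.zpowNat ((b i : ℤ) - (a j : ℤ)))
    (hB : ∀ i j, B i j ∈ P.zpowNat ((a i : ℤ) + (d : ℤ) - (b j : ℤ)))
    (hreg : ∀ (s : R) (k : ℕ), w * s ∈ P ^ (d + k) → s ∈ P ^ k) :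
    ∀ (k : ℕ) (v : Fin n → R),
      (∀ j, v j ∈ P ^ (b j + k)) →
      (∀ i, B.mulVec v i ∈ Ideal.span {w}) →
      ∃ u : Fin n → R, (∀ j, u j ∈ P ^ (a j + k)) ∧ v = A.mulVec u :=
  statement8_general P w hw A B hAB a b d hB hreg
end

section
/- Let a, b be integers with b ≥ a > 2 and set w = x^a + y^b, A = [[x^{a−1}, y^{b−1}],[y, −x]], and B = [[x, y^{b−1}],[y, −x^{a−1}]]. Then (A, B) is a matrix factorization of w (A·B = B·A = w·1), and it is asymptotically periodic with levels α = (1,1), β = (a,2) and shift d = a: for all f, g ∈ P one has x^{a−1}f + y^{b−1}g ∈ P^a and yf − xg ∈ P², and for all f′ ∈ P^a and g′ ∈ P² one has xf′ + y^{b−1}g′ ∈ P^{1+a} and yf′ − x^{a−1}g′ ∈ P^{1+a}. -/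
theorem Matrix.fin_two_factorization {R : Type*} [CommRing R] (p q s t : R) :
    !![p, q; s, -t] * !![t, q; s, -p] = (p * t + q * s) • (1 : Matrix (Fin 2) (Fin 2) R) ∧
      !![t, q; s, -p] * !![p, q; s, -t] = (p * t + q * s) • (1 : Matrix (Fin 2) (Fin 2) R) := by
  constructor <;> ext i j <;> fin_cases i <;> fin_cases j <;>
    simp [Matrix.mul_apply] <;> ring

theorem Ideal.mul_mem_pow_of_le_add {R : Type*} [CommSemiring R] {I : Ideal R} {u f : R}
    {m n N : ℕ} (hu : u ∈ I ^ m) (hf : f ∈ I ^ n) (h : N ≤ m + n) : u * f ∈ I ^ N :=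
  Ideal.pow_le_pow_right h (pow_add I m n ▸ Ideal.mul_mem_mul hu hf)

/-- the standard matrix factorization of `x^a + y^b` is
asymptotically periodic with levels `(1,1)`, `(a,2)` and shift `d = a`. -/
theorem statement10 {k : Type*} [Field k] (a b : ℕ) (ha : 2 < a) (hab : a ≤ b) :
    let x : MvPolynomial (Fin 2) k := MvPolynomial.X 0
    let y : MvPolynomial (Fin 2) k := MvPolynomial.X 1
    let w := x ^ a + y ^ b
    let P : Ideal (MvPolynomial (Fin 2) k) := Ideal.span {x, y}
    let A : Matrix (Fin 2) (Fin 2) (MvPolynomial (Fin 2) k) :=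
      !![x ^ (a - 1), y ^ (b - 1); y, -x]
    let B : Matrix (Fin 2) (Fin 2) (MvPolynomial (Fin 2) k) :=
      !![x, y ^ (b - 1); y, -(x ^ (a - 1))]
    (A * B = w • (1 : Matrix (Fin 2) (Fin 2) (MvPolynomial (Fin 2) k)) ∧
      B * A = w • (1 : Matrix (Fin 2) (Fin 2) (MvPolynomial (Fin 2) k))) ∧
    (∀ f ∈ P, ∀ g ∈ P,
      x ^ (a - 1) * f + y ^ (b - 1) * g ∈ P ^ a ∧ y * f - x * g ∈ P ^ 2) ∧
    (∀ f' ∈ P ^ a, ∀ g' ∈ P ^ 2,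
      x * f' + y ^ (b - 1) * g' ∈ P ^ (1 + a) ∧
      y * f' - x ^ (a - 1) * g' ∈ P ^ (1 + a)) := by
  intro x y w P A B
  have hx : x ∈ P ^ 1 := by rw [pow_one]; exact Ideal.subset_span (by simp)
  have hy : y ∈ P ^ 1 := by rw [pow_one]; exact Ideal.subset_span (by simp)
  have hxa : x ^ (a - 1) ∈ P ^ (a - 1) := Ideal.pow_mem_pow (pow_one P ▸ hx) _
  have hyb : y ^ (b - 1) ∈ P ^ (b - 1) := Ideal.pow_mem_pow (pow_one P ▸ hy) _
  refine ⟨?_, fun f hf g hg => ?_, fun f hf g hg => ?_⟩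
  · have hw : w = x ^ (a - 1) * x + y ^ (b - 1) * y := by
      rw [← pow_succ, ← pow_succ, Nat.sub_add_cancel (by omega), Nat.sub_add_cancel (by omega)]
    rw [hw]
    exact Matrix.fin_two_factorization _ _ _ _
  · rw [← pow_one P] at hf hg
    exact ⟨add_mem (Ideal.mul_mem_pow_of_le_add hxa hf (by omega))
        (Ideal.mul_mem_pow_of_le_add hyb hg (by omega)),
      sub_mem (Ideal.mul_mem_pow_of_le_add hy hf (by omega))
        (Ideal.mul_mem_pow_of_le_add hx hg (by omega))⟩
  · exact ⟨add_mem (Ideal.mul_mem_pow_of_le_add hx hf (by omega))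
        (Ideal.mul_mem_pow_of_le_add hyb hg (by omega)),
      sub_mem (Ideal.mul_mem_pow_of_le_add hy hf (by omega))
        (Ideal.mul_mem_pow_of_le_add hxa hg (by omega))⟩
end

section
/- Let a, b be integers with b ≥ a > 2, set w = x^a + y^b, A′ = [[x^{a−1}+y, y^{b−1}−x],[y, −x]], and B′ = [[x, y^{b−1}−x],[y, −x^{a−1}−y]]. Then (A′, B′) is a matrix factorization of w (A′·B′ = B′·A′ = w·1), but it admits no asymptotically periodic presentation with shift d = a: there exist no positive integers α₁, α₂, β₁, β₂ such that for all f ∈ P^{α₁} and g ∈ P^{α₂} one has (x^{a−1}+y)f + (y^{b−1}−x)g ∈ P^{β₁} and yf − xg ∈ P^{β₂}, and for all f′ ∈ P^{β₁} and g′ ∈ P^{β₂} one has xf′ + (y^{b−1}−x)g′ ∈ P^{α₁+a} and yf′ − (x^{a−1}+y)g′ ∈ P^{α₂+a}. -/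
/-!
The specialisations `x ↦ 0, y ↦ t` and `x ↦ t, y ↦ 0` into `k[t]` send `P ^ n` into `(t ^ n)`
and turn the diagonal entries `x ^ (a - 1) + y` of `A'` and `x` of `B'` into `t`. Testing the
presentation on `f = y ^ α₁` and `f' = x ^ β₁` therefore forces `β₁ ≤ α₁ + 1` and
`α₁ + a ≤ β₁ + 1`: going through `A'` and back through `B'` raises the order of vanishing by
at most two, while the shift demands `a > 2`.
-/

theorem Ideal.pow_dvd_map_of_mem_span_pow {R S F : Type*} [CommSemiring R] [CommSemiring S]
    [FunLike F R S] [RingHomClass F R S] (φ : F) {s : Set R} {t : S} (hs : ∀ r ∈ s, t ∣ φ r)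
    {n : ℕ} {p : R} (hp : p ∈ Ideal.span s ^ n) : t ^ n ∣ φ p := by
  have hmap : (Ideal.span s).map φ ≤ Ideal.span {t} := by
    rw [Ideal.map_span, Ideal.span_le]
    rintro _ ⟨r, hr, rfl⟩
    exact Ideal.mem_span_singleton.mpr (hs r hr)
  have := Ideal.pow_right_mono hmap n (Ideal.map_pow φ _ n ▸ Ideal.mem_map_of_mem φ hp)
  rwa [Ideal.span_singleton_pow, Ideal.mem_span_singleton] at this

def Matrix.IsMatrixFactorization {n R : Type*} [Fintype n] [DecidableEq n] [CommRing R]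
    (A B : Matrix n n R) (w : R) : Prop :=
  A * B = w • (1 : Matrix n n R) ∧ B * A = w • (1 : Matrix n n R)

theorem Matrix.isMatrixFactorization_fin_two {R : Type*} [CommRing R] (x y p q : R) :
    IsMatrixFactorization !![p + y, q - x; y, -x] !![x, q - x; y, -p - y] (p * x + q * y) := by
  constructor <;> ext i j <;> fin_cases i <;> fin_cases j <;>
    simp [Matrix.mul_apply, Fin.sum_univ_two] <;> ring

/-- an equivalent matrix factorization of `x^a + y^b` which admits
no asymptotically periodic presentation with shift `d = a`. -/
theorem statement11 {k : Type*} [Field k] (a b : ℕ) (ha : 2 < a) (hab : a ≤ b) :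
    let x : MvPolynomial (Fin 2) k := MvPolynomial.X 0
    let y : MvPolynomial (Fin 2) k := MvPolynomial.X 1
    let w := x ^ a + y ^ b
    let P : Ideal (MvPolynomial (Fin 2) k) := Ideal.span {x, y}
    let A' : Matrix (Fin 2) (Fin 2) (MvPolynomial (Fin 2) k) :=
      !![x ^ (a - 1) + y, y ^ (b - 1) - x; y, -x]
    let B' : Matrix (Fin 2) (Fin 2) (MvPolynomial (Fin 2) k) :=
      !![x, y ^ (b - 1) - x; y, -(x ^ (a - 1)) - y]
    (A' * B' = w • (1 : Matrix (Fin 2) (Fin 2) (MvPolynomial (Fin 2) k)) ∧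
      B' * A' = w • (1 : Matrix (Fin 2) (Fin 2) (MvPolynomial (Fin 2) k))) ∧
    ¬ ∃ α₁ α₂ β₁ β₂ : ℕ, 0 < α₁ ∧ 0 < α₂ ∧ 0 < β₁ ∧ 0 < β₂ ∧
      (∀ f ∈ P ^ α₁, ∀ g ∈ P ^ α₂,
        (x ^ (a - 1) + y) * f + (y ^ (b - 1) - x) * g ∈ P ^ β₁ ∧
        y * f - x * g ∈ P ^ β₂) ∧
      (∀ f' ∈ P ^ β₁, ∀ g' ∈ P ^ β₂,
        x * f' + (y ^ (b - 1) - x) * g' ∈ P ^ (α₁ + a) ∧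
        y * f' - (x ^ (a - 1) + y) * g' ∈ P ^ (α₂ + a)) := by
  intro x y w P A' B'
  have hw : w = x ^ (a - 1) * x + y ^ (b - 1) * y := by
    simp only [w, ← pow_succ, Nat.sub_add_cancel (by omega : 1 ≤ a),
      Nat.sub_add_cancel (by omega : 1 ≤ b)]
  refine ⟨hw ▸ Matrix.isMatrixFactorization_fin_two x y _ _, ?_⟩
  rintro ⟨α₁, α₂, β₁, β₂, -, -, -, -, hA', hB'⟩
  have hxP : x ∈ P := Ideal.subset_span (by simp)
  have hyP : y ∈ P := Ideal.subset_span (by simp)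
  have order_le {v : Fin 2 → Polynomial k} (hv : ∀ j, Polynomial.X ∣ v j) {m : ℕ} {p n}
      (hp : p ∈ P ^ m) (hpn : MvPolynomial.aeval v p = Polynomial.X ^ n) : m ≤ n := by
    have hdvd : Polynomial.X ^ m ∣ MvPolynomial.aeval v p :=
      Ideal.pow_dvd_map_of_mem_span_pow (MvPolynomial.aeval v) (by simp [x, y, hv]) hp
    rwa [hpn, pow_dvd_pow_iff Polynomial.X_ne_zero Polynomial.not_isUnit_X] at hdvd
  have hβ₁ : β₁ ≤ α₁ + 1 :=
    order_le (v := ![0, Polynomial.X]) (by simp [Fin.forall_fin_two])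
      (hA' _ (Ideal.pow_mem_pow hyP _) 0 (zero_mem _)).1
      (by simp [x, y, zero_pow (by omega : a - 1 ≠ 0), pow_succ'])
  have hα₁ : α₁ + a ≤ β₁ + 1 :=
    order_le (v := ![Polynomial.X, 0]) (by simp [Fin.forall_fin_two])
      (hB' _ (Ideal.pow_mem_pow hxP _) 0 (zero_mem _)).1
      (by simp [x, y, pow_succ'])
  omega
end
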